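/- arXiv:2008.10919 — 3 statements merged into one kernel-verified Lean document; each statement's English description precedes it below -/
import Mathlib

section
/- If k, l ∈ L¹_loc(ℝ₊) are nonnegative with k ∗ l = 1 on (0,∞) (convolution on the half-line), and v ∈ L¹((0,T); X) for a Banach space X satisfies that k ∗ v is absolutely continuous on [0,T] with (k∗v)(0) = 0, then v = l ∗ ∂ₜ(k ∗ v) almost everywhere on (0,T). -/
/-!
Convolving with `l` and using `l ∗ k = 1`,
`1 ∗ v = (l ∗ k) ∗ v = l ∗ (k ∗ v) = l ∗ (1 ∗ w) = (l ∗ 1) ∗ w = 1 ∗ (l ∗ w)`,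
so `v` and `l ∗ w` have the same primitive on `[0, T]` and agree a.e. by the Lebesgue
differentiation theorem. Each reassociation is Fubini on the triangle `0 < σ ≤ s ≤ t`;
since the kernels are nonnegative, the absolute integrand integrates in `s` to
`(f ∗ g)(t - σ) |h σ|`, which is integrable in `σ`.
-/

open MeasureTheory Set

noncomputable def hconv (k v : ℝ → ℝ) (t : ℝ) : ℝ := ∫ s in Set.Ioc 0 t, k (t - s) * v s

lemma hconv_congr_ae {a a' b b' : ℝ → ℝ} {t : ℝ}
    (ha : a =ᵐ[volume.restrict (Ici 0)] a') (hb : b =ᵐ[volume.restrict (Ioc 0 t)] b') :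
    hconv a b t = hconv a' b' t := by
  have hmp := (Measure.measurePreserving_sub_left volume t).restrict_preimage
    (s := Ici 0) measurableSet_Ici
  have ha' : ∀ᵐ s ∂volume.restrict (Ioc 0 t), a (t - s) = a' (t - s) :=
    ae_restrict_of_ae_restrict_of_subset (fun s hs => by simpa using hs.2)
      (hmp.quasiMeasurePreserving.ae_eq_comp ha)
  refine integral_congr_ae ?_
  filter_upwards [ha', hb] with s h1 h2
  rw [h1, h2]

lemma hconv_comm (f g : ℝ → ℝ) {t : ℝ} (ht : 0 ≤ t) : hconv f g t = hconv g f t := by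
  have := intervalIntegral.integral_comp_sub_left (fun s => f (t - s) * g s) t (a := 0) (b := t)
  simp only [sub_sub_cancel, sub_self, sub_zero] at this
  rw [hconv, hconv, ← intervalIntegral.integral_of_le ht, ← intervalIntegral.integral_of_le ht,
    ← this]
  simp only [mul_comm]

lemma hconv_one_left (f : ℝ → ℝ) (t : ℝ) :
    hconv (fun _ => 1) f t = ∫ s in Ioc 0 t, f s := by
  simp [hconv]

lemma hconv_nonneg {f g : ℝ → ℝ} (hf : ∀ x, 0 ≤ f x) (hg : ∀ x, 0 ≤ g x) (t : ℝ) :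
    0 ≤ hconv f g t :=
  setIntegral_nonneg measurableSet_Ioc fun _ _ => mul_nonneg (hf _) (hg _)

lemma measurable_hconv {f g : ℝ → ℝ} (hf : Measurable f) (hg : Measurable g) :
    Measurable (hconv f g) := by
  have hF : StronglyMeasurable fun p : ℝ × ℝ =>
      (Ioc 0 p.1).indicator (fun s => f (p.1 - s) * g s) p.2 :=
    (((hf.comp (measurable_fst.sub measurable_snd)).mul (hg.comp measurable_snd)).indicator
      ((measurableSet_lt measurable_const measurable_snd).inter
        (measurableSet_le measurable_snd measurable_fst))).stronglyMeasurable
  convert (hF.integral_prod_right' (ν := volume)).measurable using 2 with t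
  rw [hconv, ← integral_indicator measurableSet_Ioc]

lemma MeasureTheory.IntegrableOn.comp_sub_left_Ioc {F : ℝ → ℝ} {τ : ℝ}
    (hF : IntegrableOn F (Ioc 0 τ)) :
    IntegrableOn (fun u => F (τ - u)) (Ioc 0 τ) := by
  have := ((Measure.measurePreserving_sub_left volume τ).integrableOn_comp_preimage
    (measurableEmbedding_subLeft τ)).2 hF
  simp only [preimage_const_sub_Ioc, sub_self, sub_zero] at this
  exact (integrableOn_Ioc_iff_integrableOn_Ioo).2
    ((integrableOn_Ico_iff_integrableOn_Ioo).1 this)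

lemma setIntegral_Ioc_sub_mul_sub (f g : ℝ → ℝ) (σ t : ℝ) :
    ∫ s in Ioc σ t, f (t - s) * g (s - σ) = hconv f g (t - σ) := by
  rw [← (measurePreserving_add_right volume σ).setIntegral_preimage_emb
    (measurableEmbedding_addRight σ), preimage_add_const_Ioc, sub_self, hconv]
  simp only [add_sub_cancel_right, sub_add_eq_sub_sub, sub_right_comm]

lemma integrableOn_Ioc_sub_mul_sub_iff (f g : ℝ → ℝ) (σ t : ℝ) :
    IntegrableOn (fun s => f (t - s) * g (s - σ)) (Ioc σ t) ↔
      IntegrableOn (fun u => f (t - σ - u) * g u) (Ioc 0 (t - σ)) := by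
  rw [← (measurePreserving_add_right volume σ).integrableOn_comp_preimage
    (measurableEmbedding_addRight σ), preimage_add_const_Ioc, sub_self]
  simp only [Function.comp_def, add_sub_cancel_right, sub_add_eq_sub_sub, sub_right_comm]

lemma Set.Ici_inter_Ioc_of_lt {a σ t : ℝ} (h : a < σ) : Ici σ ∩ Ioc a t = Icc σ t := by
  ext s; simp only [mem_inter_iff, mem_Ici, mem_Ioc, mem_Icc]; grind

lemma ae_restrict_Ioc_mem_Ioo {a b : ℝ} :
    ∀ᵐ x ∂volume.restrict (Ioc a b), x ∈ Ioo a b := by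
  rw [← Measure.restrict_congr_set Ioo_ae_eq_Ioc]
  exact ae_restrict_mem measurableSet_Ioo

lemma setIntegral_Ioc_ite_le_left (G : ℝ → ℝ) {a σ t : ℝ} (hσ : a < σ) :
    ∫ s in Ioc a t, (if σ ≤ s then G s else 0) = ∫ s in Ioc σ t, G s := by
  simp_rw [← mem_Ici (b := σ), ← indicator_apply]
  rw [integral_indicator measurableSet_Ici, Measure.restrict_restrict measurableSet_Ici,
    Ici_inter_Ioc_of_lt hσ, integral_Icc_eq_integral_Ioc]

lemma setIntegral_Ioc_ite_le_right (G : ℝ → ℝ) {a s t : ℝ} (hs : s ≤ t) :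
    ∫ σ in Ioc a t, (if σ ≤ s then G σ else 0) = ∫ σ in Ioc a s, G σ := by
  simp_rw [← mem_Iic (b := s), ← indicator_apply]
  rw [integral_indicator measurableSet_Iic, Measure.restrict_restrict measurableSet_Iic,
    Iic_inter_Ioc_of_le hs]

lemma integrableOn_Ioc_ite_le_left {G : ℝ → ℝ} {a σ t : ℝ} (hσ : a < σ)
    (hG : IntegrableOn G (Ioc σ t)) :
    IntegrableOn (fun s => if σ ≤ s then G s else 0) (Ioc a t) := by
  simp_rw [← mem_Ici (b := σ), ← indicator_apply]
  rw [IntegrableOn, integrable_indicator_iff measurableSet_Ici, IntegrableOn,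
    Measure.restrict_restrict measurableSet_Ici, Ici_inter_Ioc_of_lt hσ]
  exact (integrableOn_Icc_iff_integrableOn_Ioc).2 hG

lemma integral_Ioc_integral_Ioc_swap {F : ℝ → ℝ → ℝ} {a t : ℝ}
    (hF : Integrable (Function.uncurry fun s σ => if σ ≤ s then F s σ else 0)
      ((volume.restrict (Ioc a t)).prod (volume.restrict (Ioc a t)))) :
    ∫ s in Ioc a t, ∫ σ in Ioc a s, F s σ = ∫ σ in Ioc a t, ∫ s in Ioc σ t, F s σ := by
  calc ∫ s in Ioc a t, ∫ σ in Ioc a s, F s σ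
      = ∫ s in Ioc a t, ∫ σ in Ioc a t, (if σ ≤ s then F s σ else 0) :=
        setIntegral_congr_fun measurableSet_Ioc fun s hs =>
          (setIntegral_Ioc_ite_le_right _ hs.2).symm
    _ = ∫ σ in Ioc a t, ∫ s in Ioc a t, (if σ ≤ s then F s σ else 0) :=
        integral_integral_swap hF
    _ = ∫ σ in Ioc a t, ∫ s in Ioc σ t, F s σ :=
        setIntegral_congr_fun measurableSet_Ioc fun σ hσ => setIntegral_Ioc_ite_le_left _ hσ.1

lemma integrable_hconv_triangle {f g h : ℝ → ℝ} {t : ℝ}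
    (hf : Measurable f) (hg : Measurable g) (hh : Measurable h)
    (hf0 : ∀ x, 0 ≤ f x) (hg0 : ∀ x, 0 ≤ g x)
    (hfg : ∀ τ ∈ Ioo 0 t, IntegrableOn (fun u => f (τ - u) * g u) (Ioc 0 τ))
    (hbound : IntegrableOn (fun σ => hconv f g (t - σ) * h σ) (Ioc 0 t)) :
    Integrable (Function.uncurry fun s σ => if σ ≤ s then f (t - s) * g (s - σ) * h σ else 0)
      ((volume.restrict (Ioc 0 t)).prod (volume.restrict (Ioc 0 t))) := by
  have hmeas : Measurable (Function.uncurry fun s σ =>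
      if σ ≤ s then f (t - s) * g (s - σ) * h σ else 0) :=
    Measurable.ite (measurableSet_le measurable_snd measurable_fst)
      (((hf.comp (measurable_const.sub measurable_fst)).mul
        (hg.comp (measurable_fst.sub measurable_snd))).mul (hh.comp measurable_snd))
      measurable_const
  refine (integrable_prod_iff' hmeas.aestronglyMeasurable).2 ⟨?_, ?_⟩
  · filter_upwards [ae_restrict_Ioc_mem_Ioo] with σ hσ
    have hsec := hfg (t - σ) ⟨sub_pos.2 hσ.2, sub_lt_self t hσ.1⟩
    exact integrableOn_Ioc_ite_le_left hσ.1
      (((integrableOn_Ioc_sub_mul_sub_iff f g σ t).2 hsec).mul_const (h σ))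
  · refine hbound.norm.congr ?_
    filter_upwards [ae_restrict_Ioc_mem_Ioo] with σ hσ
    simp only [Function.uncurry_apply_pair, apply_ite norm, norm_zero]
    rw [setIntegral_Ioc_ite_le_left _ hσ.1]
    simp only [norm_mul, Real.norm_of_nonneg (hf0 _), Real.norm_of_nonneg (hg0 _)]
    rw [integral_mul_const, setIntegral_Ioc_sub_mul_sub,
      Real.norm_of_nonneg (hconv_nonneg hf0 hg0 _)]

lemma hconv_assoc {f g h : ℝ → ℝ} {t : ℝ} (hf : Measurable f) (hg : Measurable g)
    (hh : Measurable h) (hf0 : ∀ x, 0 ≤ f x) (hg0 : ∀ x, 0 ≤ g x)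
    (hfg : ∀ τ ∈ Ioo 0 t, IntegrableOn (fun u => f (τ - u) * g u) (Ioc 0 τ))
    (hbound : IntegrableOn (fun σ => hconv f g (t - σ) * h σ) (Ioc 0 t)) :
    hconv f (hconv g h) t = hconv (hconv f g) h t := by
  calc hconv f (hconv g h) t
      = ∫ s in Ioc 0 t, ∫ σ in Ioc 0 s, f (t - s) * g (s - σ) * h σ := by
        refine setIntegral_congr_fun measurableSet_Ioc fun s _ => ?_
        simp only [hconv, ← integral_const_mul, mul_assoc]
    _ = ∫ σ in Ioc 0 t, ∫ s in Ioc σ t, f (t - s) * g (s - σ) * h σ :=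
        integral_Ioc_integral_Ioc_swap
          (integrable_hconv_triangle hf hg hh hf0 hg0 hfg hbound)
    _ = hconv (hconv f g) h t := by
        refine setIntegral_congr_fun measurableSet_Ioc fun σ _ => ?_
        rw [integral_mul_const, setIntegral_Ioc_sub_mul_sub]

lemma integrableOn_hconv_one_left_sub_mul {g h : ℝ → ℝ} {t : ℝ} (hg : Measurable g)
    (hg0 : ∀ x, 0 ≤ g x) (hgi : IntegrableOn g (Ioc 0 t)) (hhi : IntegrableOn h (Ioc 0 t)) :
    IntegrableOn (fun σ => hconv (fun _ => 1) g (t - σ) * h σ) (Ioc 0 t) := by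
  refine hhi.bdd_mul (c := ∫ s in Ioc 0 t, g s)
    ((measurable_hconv measurable_const hg).comp
      (measurable_const.sub measurable_id)).aestronglyMeasurable ?_
  filter_upwards [ae_restrict_mem measurableSet_Ioc] with σ hσ
  rw [Real.norm_of_nonneg (hconv_nonneg (fun _ => zero_le_one) hg0 _), hconv_one_left]
  exact setIntegral_mono_set hgi (ae_of_all _ hg0)
    (Ioc_subset_Ioc_right (sub_le_self t hσ.1.le)).eventuallyLE

lemma integrableOn_hconv {g h : ℝ → ℝ} {t : ℝ} (hg : Measurable g) (hh : Measurable h)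
    (hg0 : ∀ x, 0 ≤ g x) (hgi : IntegrableOn g (Ioc 0 t)) (hhi : IntegrableOn h (Ioc 0 t)) :
    IntegrableOn (hconv g h) (Ioc 0 t) := by
  have hF := integrable_hconv_triangle measurable_const hg hh (fun _ => zero_le_one) hg0
    (fun τ hτ => by simpa using hgi.mono_set (Ioc_subset_Ioc_right hτ.2.le))
    (integrableOn_hconv_one_left_sub_mul hg hg0 hgi hhi)
  refine hF.integral_prod_left.congr ?_
  filter_upwards [ae_restrict_mem measurableSet_Ioc] with s hs
  simp only [Function.uncurry_apply_pair, one_mul]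
  rw [setIntegral_Ioc_ite_le_right _ hs.2]
  rfl

lemma ae_eq_zero_of_forall_setIntegral_Ioc_eq_zero {f : ℝ → ℝ} {T : ℝ}
    (hf : IntegrableOn f (Ioc 0 T)) (h : ∀ t ∈ Icc 0 T, ∫ s in Ioc 0 t, f s = 0) :
    ∀ᵐ t ∂volume.restrict (Ioc 0 T), f t = 0 := by
  rcases le_or_gt T 0 with hT | hT
  · simp [Ioc_eq_empty_of_le hT]
  have hderiv :=
    ((intervalIntegrable_iff_integrableOn_Ioc_of_le hT.le).2 hf).ae_hasDerivAt_integral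
  filter_upwards [ae_restrict_of_ae hderiv, ae_restrict_Ioc_mem_Ioo] with x hx hxT
  have hd := hx (uIcc_of_le hT.le ▸ Ioo_subset_Icc_self hxT) 0 left_mem_uIcc
  have hzero : (fun _ => (0 : ℝ)) =ᶠ[nhds x] fun y => ∫ s in 0..y, f s := by
    filter_upwards [Ioo_mem_nhds hxT.1 hxT.2] with y hy
    rw [intervalIntegral.integral_of_le hy.1.le, h y ⟨hy.1.le, hy.2.le⟩]
  exact (hd.congr_of_eventuallyEq hzero).unique (hasDerivAt_const x 0)

lemma setIntegral_Ioc_eq_setIntegral_hconv {k l v w : ℝ → ℝ} {t : ℝ}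
    (hk : Measurable k) (hl : Measurable l) (hv : Measurable v) (hw : Measurable w)
    (hk0 : ∀ x, 0 ≤ k x) (hl0 : ∀ x, 0 ≤ l x) (hkl : ∀ τ ∈ Ioo 0 t, hconv k l τ = 1)
    (hli : IntegrableOn l (Ioc 0 t)) (hvi : IntegrableOn v (Ioc 0 t))
    (hwi : IntegrableOn w (Ioc 0 t))
    (hAC : ∀ s ∈ Ioc 0 t, hconv k v s = ∫ σ in Ioc 0 s, w σ) :
    ∫ s in Ioc 0 t, v s = ∫ s in Ioc 0 t, hconv l w s := by
  have hone : ∀ _ : ℝ, (0 : ℝ) ≤ 1 := fun _ => zero_le_one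
  have hlk : (fun σ => hconv l k (t - σ) * v σ) =ᵐ[volume.restrict (Ioc 0 t)] v := by
    filter_upwards [ae_restrict_Ioc_mem_Ioo] with σ hσ
    rw [hconv_comm l k (sub_nonneg.2 hσ.2.le), hkl _ ⟨sub_pos.2 hσ.2, sub_lt_self t hσ.1⟩,
      one_mul]
  have hl1w : IntegrableOn (fun σ => hconv (fun _ => 1) l (t - σ) * w σ) (Ioc 0 t) :=
    integrableOn_hconv_one_left_sub_mul hl hl0 hli hwi
  have hl1 : ∀ σ ∈ Ioc 0 t, hconv l (fun _ => 1) (t - σ) = hconv (fun _ => 1) l (t - σ) :=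
    fun σ hσ => hconv_comm _ _ (sub_nonneg.2 hσ.2)
  calc ∫ s in Ioc 0 t, v s = hconv (hconv l k) v t := (integral_congr_ae hlk).symm
    _ = hconv l (hconv k v) t := by
        refine (hconv_assoc hl hk hv hl0 hk0 (fun τ hτ => ?_) (hvi.congr hlk.symm)).symm
        have := IntegrableOn.comp_sub_left_Ioc (integrable_of_integral_eq_one (hkl τ hτ))
        simpa only [sub_sub_cancel, mul_comm] using this
    _ = hconv l (hconv (fun _ => 1) w) t :=
        setIntegral_congr_fun measurableSet_Ioc fun s hs => by rw [hAC s hs, hconv_one_left]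
    _ = hconv (hconv l (fun _ => 1)) w t := by
        refine hconv_assoc hl measurable_const hw hl0 hone (fun τ hτ => ?_) ?_
        · simpa using (hli.mono_set (Ioc_subset_Ioc_right hτ.2.le)).comp_sub_left_Ioc
        · exact hl1w.congr_fun (fun σ hσ => by rw [hl1 σ hσ]) measurableSet_Ioc
    _ = hconv (hconv (fun _ => 1) l) w t :=
        setIntegral_congr_fun measurableSet_Ioc fun σ hσ => by rw [hl1 σ hσ]
    _ = hconv (fun _ => 1) (hconv l w) t := by
        refine (hconv_assoc measurable_const hl hw hone hl0 (fun τ hτ => ?_) hl1w).symm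
        simpa using hli.mono_set (Ioc_subset_Ioc_right hτ.2.le)
    _ = ∫ s in Ioc 0 t, hconv l w s := hconv_one_left _ _

lemma ae_eq_hconv_of_measurable {k l v w : ℝ → ℝ} {T : ℝ}
    (hk : Measurable k) (hl : Measurable l) (hv : Measurable v) (hw : Measurable w)
    (hk0 : ∀ x, 0 ≤ k x) (hl0 : ∀ x, 0 ≤ l x) (hkl : ∀ τ ∈ Ioo 0 T, hconv k l τ = 1)
    (hli : IntegrableOn l (Ioc 0 T)) (hvi : IntegrableOn v (Ioc 0 T))
    (hwi : IntegrableOn w (Ioc 0 T))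
    (hAC : ∀ t ∈ Icc 0 T, hconv k v t = ∫ s in Ioc 0 t, w s) :
    ∀ᵐ t ∂volume.restrict (Ioc 0 T), v t = hconv l w t := by
  have hlw : IntegrableOn (hconv l w) (Ioc 0 T) := integrableOn_hconv hl hw hl0 hli hwi
  have hdiff := ae_eq_zero_of_forall_setIntegral_Ioc_eq_zero (hvi.sub hlw) fun t ht => by
    have hsub : Ioc 0 t ⊆ Ioc 0 T := Ioc_subset_Ioc_right ht.2
    change ∫ s in Ioc 0 t, (v s - hconv l w s) = 0
    rw [integral_sub (hvi.mono_set hsub) (hlw.mono_set hsub), sub_eq_zero]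
    exact setIntegral_Ioc_eq_setIntegral_hconv hk hl hv hw hk0 hl0
      (fun τ hτ => hkl τ ⟨hτ.1, hτ.2.trans_le ht.2⟩) (hli.mono_set hsub)
      (hvi.mono_set hsub) (hwi.mono_set hsub) fun s hs => hAC s ⟨hs.1.le, hs.2.trans ht.2⟩
  filter_upwards [hdiff] with t ht
  exact sub_eq_zero.1 ht

lemma exists_measurable_nonneg_ae_eq {α : Type*} [MeasurableSpace α] {μ : Measure α}
    {f : α → ℝ} (hf : AEMeasurable f μ) (h0 : 0 ≤ᵐ[μ] f) :
    ∃ g : α → ℝ, Measurable g ∧ (∀ x, 0 ≤ g x) ∧ f =ᵐ[μ] g := by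
  refine ⟨fun x => max (hf.mk f x) 0, hf.measurable_mk.max measurable_const,
    fun _ => le_max_right _ _, ?_⟩
  filter_upwards [hf.ae_eq_mk, h0] with x h1 h2
  rw [← h1]
  exact (max_eq_left h2).symm

theorem stmt0_general
    (k l : ℝ → ℝ) (T : ℝ)
    (hkloc : LocallyIntegrableOn k (Set.Ici 0))
    (hlloc : LocallyIntegrableOn l (Set.Ici 0))
    (hknn : ∀ t, 0 ≤ t → 0 ≤ k t) (hlnn : ∀ t, 0 ≤ t → 0 ≤ l t)
    (hkl : ∀ t, 0 < t → hconv k l t = 1)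
    (v w : ℝ → ℝ)
    (hv : IntegrableOn v (Set.Ioc 0 T))
    (hw : IntegrableOn w (Set.Ioc 0 T))
    (hAC : ∀ t ∈ Set.Icc 0 T, hconv k v t = ∫ s in Set.Ioc 0 t, w s) :
    ∀ᵐ t ∂(volume.restrict (Set.Ioc 0 T)), v t = hconv l w t := by
  have nonneg_ae {f : ℝ → ℝ} (hf : ∀ t, 0 ≤ t → 0 ≤ f t) :
      0 ≤ᵐ[volume.restrict (Ici 0)] f :=
    (ae_restrict_iff' measurableSet_Ici).2 (ae_of_all _ hf)
  obtain ⟨k₀, hk₀m, hk₀0, hk₀⟩ := exists_measurable_nonneg_ae_eq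
    hkloc.aestronglyMeasurable.aemeasurable (nonneg_ae hknn)
  obtain ⟨l₀, hl₀m, hl₀0, hl₀⟩ := exists_measurable_nonneg_ae_eq
    hlloc.aestronglyMeasurable.aemeasurable (nonneg_ae hlnn)
  have hv₀ := hv.aemeasurable.ae_eq_mk
  have hw₀ := hw.aemeasurable.ae_eq_mk
  have hl₀' {t : ℝ} : l =ᵐ[volume.restrict (Ioc 0 t)] l₀ :=
    ae_restrict_of_ae_restrict_of_subset (Ioc_subset_Ioi_self.trans Ioi_subset_Ici_self) hl₀
  have shrink {f g : ℝ → ℝ} {t : ℝ} (ht : t ≤ T)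
      (hfg : f =ᵐ[volume.restrict (Ioc 0 T)] g) : f =ᵐ[volume.restrict (Ioc 0 t)] g :=
    ae_restrict_of_ae_restrict_of_subset (Ioc_subset_Ioc_right ht) hfg
  have hl₀i : IntegrableOn l₀ (Ioc 0 T) :=
    ((hlloc.integrableOn_compact_subset Icc_subset_Ici_self isCompact_Icc).mono_set
      Ioc_subset_Icc_self).congr hl₀'
  have key := ae_eq_hconv_of_measurable hk₀m hl₀m hv.aemeasurable.measurable_mk
    hw.aemeasurable.measurable_mk hk₀0 hl₀0
    (fun t ht => by rw [← hconv_congr_ae hk₀ hl₀', hkl t ht.1])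
    hl₀i (hv.congr hv₀) (hw.congr hw₀)
    (fun t ht => by
      rw [← hconv_congr_ae hk₀ (shrink ht.2 hv₀), hAC t ht]
      exact integral_congr_ae (shrink ht.2 hw₀))
  filter_upwards [key, hv₀, ae_restrict_mem measurableSet_Ioc] with t h1 h2 ht
  rw [h2, h1, hconv_congr_ae hl₀ (shrink ht.2 hw₀)]

/-- if `k, l` are nonnegative, locally integrable on ℝ₊ with `k∗l = 1` on `(0,∞)`,
`v ∈ L¹((0,T))`, and `k∗v` is absolutely continuous on `[0,T]` with `(k∗v)(0)=0`
(expressed by `k∗v = 1∗w` for an integrable `w = ∂ₜ(k∗v)`), then `v = l ∗ ∂ₜ(k∗v)`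
a.e. on `(0,T)`. -/
theorem stmt0
    (k l : ℝ → ℝ) (T : ℝ) (hT : 0 < T)
    (hkloc : LocallyIntegrableOn k (Set.Ici 0))
    (hlloc : LocallyIntegrableOn l (Set.Ici 0))
    (hknn : ∀ t, 0 ≤ t → 0 ≤ k t) (hlnn : ∀ t, 0 ≤ t → 0 ≤ l t)
    (hkl : ∀ t, 0 < t → hconv k l t = 1)
    (v w : ℝ → ℝ)
    (hv : IntegrableOn v (Set.Ioc 0 T))
    (hw : IntegrableOn w (Set.Ioc 0 T))
    (hAC : ∀ t ∈ Set.Icc 0 T, hconv k v t = ∫ s in Set.Ioc 0 t, w s) :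
    ∀ᵐ t ∂(volume.restrict (Set.Ioc 0 T)), v t = hconv l w t :=
  stmt0_general k l T hkloc hlloc hknn hlnn hkl v w hv hw hAC
end

section
/- Let l ∈ L¹((0,T)) and v ∈ L_p((0,T); ℝ) with 1 ≤ p < ∞. For h > 0 define the translate (τ_h f)(t) = f(t+h). Then ∫₀^{T−h} |(l∗v)(t+h) − (l∗v)(t)|^p dt ≤ 2^p ( |τ_h l − l|_{L¹((0,T−h))}^p + |χ_{(0,h)} l|_{L¹((0,T))}^p ) · |v|_{L_p((0,T))}^p, where χ_{(0,h)} is the indicator function of (0,h). -/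
/-!
Extend `v` by zero outside `(0, T]` to `V`. For `0 < t ≤ T - h` the difference
`(l∗v)(t + h) - (l∗v)(t)` is the full-line convolution `(k ⋆ V)(t)` with the kernel
`k = 1_{[0, T-h)} (τ_h l - l) + τ_h (1_{[0, h)} l)`, whose `L¹` norm is
`‖τ_h l - l‖_{L¹(0,T-h)} + ‖χ_{(0,h)} l‖_{L¹(0,T)}`. Young's inequality `‖k ⋆ V‖_p ≤ ‖k‖₁ ‖V‖_p`
(Hölder against the measure `k(x - y) dy`, then Tonelli) and `(a + b)^p ≤ 2^p (a^p + b^p)` finish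
the proof. The pointwise identity is only used through `‖∫ f - ∫ g‖ ≤ ∫ ‖f - g‖`, which stays true
when the convolution integrals are not integrable and take the junk value `0`.
-/

open MeasureTheory Set
open scoped ENNReal

theorem ENNReal.mul_eq_rpow_mul_rpow_mul_rpow (a b : ℝ≥0∞) {p : ℝ} (hp : 1 ≤ p) :
    a * b = a ^ (1 - p⁻¹) * (a * b ^ p) ^ p⁻¹ := by
  have hp0 : 0 < p := by linarith
  have hpinv : p⁻¹ ≤ 1 := inv_le_one_of_one_le₀ hp
  rw [ENNReal.mul_rpow_of_nonneg _ _ (inv_nonneg.2 hp0.le), ← ENNReal.rpow_mul,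
    mul_inv_cancel₀ hp0.ne', ENNReal.rpow_one, ← mul_assoc,
    ← ENNReal.rpow_add_of_nonneg _ _ (by linarith) (inv_nonneg.2 hp0.le), sub_add_cancel,
    ENNReal.rpow_one]

theorem Real.add_rpow_le_two_rpow_mul_add_rpow {a b p : ℝ} (ha : 0 ≤ a) (hb : 0 ≤ b)
    (hp : 1 ≤ p) : (a + b) ^ p ≤ 2 ^ p * (a ^ p + b ^ p) := by
  have h := NNReal.rpow_add_le_mul_rpow_add_rpow ⟨a, ha⟩ ⟨b, hb⟩ hp
  calc (a + b) ^ p ≤ 2 ^ (p - 1) * (a ^ p + b ^ p) := by exact_mod_cast h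
    _ ≤ 2 ^ p * (a ^ p + b ^ p) := by
        gcongr
        · norm_num
        · linarith

theorem lintegral_rpow_lintegral_sub_mul_le {G : Type*} [MeasurableSpace G] [AddCommGroup G]
    [MeasurableAdd₂ G] [MeasurableNeg G] (μ : Measure G) [SFinite μ] [μ.IsAddLeftInvariant]
    [μ.IsNegInvariant] {k g : G → ℝ≥0∞} (hk : Measurable k) (hg : Measurable g) {p : ℝ}
    (hp : 1 ≤ p) :
    ∫⁻ x, (∫⁻ y, k (x - y) * g y ∂μ) ^ p ∂μ ≤ (∫⁻ x, k x ∂μ) ^ p * ∫⁻ y, g y ^ p ∂μ := by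
  have hp0 : 0 < p := by linarith
  set K := ∫⁻ x, k x ∂μ with hK
  have holder (x : G) :
      (∫⁻ y, k (x - y) * g y ∂μ) ^ p ≤ K ^ (p - 1) * ∫⁻ y, k (x - y) * g y ^ p ∂μ := by
    have hkx : Measurable fun y => k (x - y) := hk.comp (measurable_const.sub measurable_id)
    have h := ENNReal.lintegral_mul_norm_pow_le (μ := μ) hkx.aemeasurable
      (hkx.mul (hg.pow_const p)).aemeasurable (sub_nonneg.2 (inv_le_one_of_one_le₀ hp))
      (inv_nonneg.2 hp0.le) (sub_add_cancel 1 p⁻¹)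
    simp only [Pi.mul_apply, ← ENNReal.mul_eq_rpow_mul_rpow_mul_rpow _ _ hp,
      lintegral_sub_left_eq_self] at h
    calc (∫⁻ y, k (x - y) * g y ∂μ) ^ p
        ≤ (K ^ (1 - p⁻¹) * (∫⁻ y, k (x - y) * g y ^ p ∂μ) ^ p⁻¹) ^ p :=
          ENNReal.rpow_le_rpow h hp0.le
      _ = K ^ (p - 1) * ∫⁻ y, k (x - y) * g y ^ p ∂μ := by
          rw [ENNReal.mul_rpow_of_nonneg _ _ hp0.le, ← ENNReal.rpow_mul, ← ENNReal.rpow_mul,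
            inv_mul_cancel₀ hp0.ne', ENNReal.rpow_one, sub_mul, one_mul,
            inv_mul_cancel₀ hp0.ne']
  have hmeas : Measurable (Function.uncurry fun x y => k (x - y) * g y ^ p) :=
    (hk.comp measurable_sub).mul ((hg.pow_const p).comp measurable_snd)
  calc ∫⁻ x, (∫⁻ y, k (x - y) * g y ∂μ) ^ p ∂μ
      ≤ ∫⁻ x, K ^ (p - 1) * ∫⁻ y, k (x - y) * g y ^ p ∂μ ∂μ := lintegral_mono holder
    _ = K ^ (p - 1) * ∫⁻ y, (∫⁻ x, k (x - y) ∂μ) * g y ^ p ∂μ := by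
        rw [lintegral_const_mul _ hmeas.lintegral_prod_right,
          lintegral_lintegral_swap hmeas.aemeasurable]
        congr 1
        refine lintegral_congr fun y => ?_
        exact lintegral_mul_const _ (hk.comp (measurable_id.sub measurable_const))
    _ = K ^ p * ∫⁻ y, g y ^ p ∂μ := by
        simp_rw [lintegral_sub_right_eq_self]
        rw [lintegral_const_mul _ (hg.pow_const p), ← mul_assoc]
        have hKp : K ^ (p - 1) * K = K ^ p := by
          simpa using
            (ENNReal.rpow_add_of_nonneg (x := K) (p - 1) 1 (by linarith) zero_le_one).symm
        rw [← hK, hKp]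

theorem enorm_integral_sub_integral_le {α E : Type*} [MeasurableSpace α] {μ : Measure α}
    [NormedAddCommGroup E] [NormedSpace ℝ E] {f g : α → E}
    (hf : AEStronglyMeasurable f μ) (hg : AEStronglyMeasurable g μ) :
    ‖∫ x, f x ∂μ - ∫ x, g x ∂μ‖ₑ ≤ ∫⁻ x, ‖f x - g x‖ₑ ∂μ := by
  by_cases hfg : Integrable (f - g) μ
  · by_cases hfi : Integrable f μ
    · have hgi : Integrable g μ := by simpa using hfi.sub hfg
      rw [← integral_sub hfi hgi]
      exact enorm_integral_le_lintegral_enorm _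
    · have hgi : ¬ Integrable g μ := fun hgi => hfi (by simpa using hgi.add hfg)
      simp [integral_undef hfi, integral_undef hgi]
  · have htop : ∫⁻ x, ‖f x - g x‖ₑ ∂μ = ∞ := by
      by_contra hne
      exact hfg ⟨hf.sub hg, lt_top_iff_ne_top.2 hne⟩
    rw [htop]
    exact le_top

noncomputable def hconvShiftKernel (l : ℝ → ℝ) (T h u : ℝ) : ℝ :=
  (Ico 0 (T - h)).indicator (fun u => l (u + h) - l u) u + (Ico 0 h).indicator l (u + h)

theorem hconvShiftKernel_mul_indicator (l v : ℝ → ℝ) {T h t : ℝ} (hh : 0 ≤ h) (ht : t + h ≤ T)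
    (s : ℝ) :
    hconvShiftKernel l T h (t - s) * (Ioc 0 T).indicator v s
      = (Ioc 0 (t + h)).indicator (fun s => l (t + h - s) * v s) s
        - (Ioc 0 t).indicator (fun s => l (t - s) * v s) s := by
  simp only [hconvShiftKernel, indicator_apply, mem_Ico, mem_Ioc, sub_add_eq_add_sub]
  split_ifs <;> grind

theorem measurable_hconvShiftKernel {l : ℝ → ℝ} (hl : Measurable l) (T h : ℝ) :
    Measurable (hconvShiftKernel l T h) :=
  (((hl.comp (measurable_add_const h)).sub hl).indicator measurableSet_Ico).add
    ((hl.indicator measurableSet_Ico).comp (measurable_add_const h))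

theorem enorm_hconv_add_sub_hconv_le {l v : ℝ → ℝ} (hl : Measurable l) (hv : Measurable v)
    {T h t : ℝ} (hh : 0 ≤ h) (ht : t + h ≤ T) :
    ‖hconv l v (t + h) - hconv l v t‖ₑ
      ≤ ∫⁻ s, ‖hconvShiftKernel l T h (t - s)‖ₑ * ‖(Ioc 0 T).indicator v s‖ₑ := by
  have hconv_eq (τ : ℝ) :
      hconv l v τ = ∫ s, (Ioc 0 τ).indicator (fun s => l (τ - s) * v s) s :=
    (integral_indicator measurableSet_Ioc).symm
  have hmeas (τ : ℝ) :
      AEStronglyMeasurable ((Ioc 0 τ).indicator (fun s => l (τ - s) * v s)) :=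
    (((hl.comp (measurable_const.sub measurable_id)).mul hv).indicator
      measurableSet_Ioc).aestronglyMeasurable
  rw [hconv_eq, hconv_eq]
  refine (enorm_integral_sub_integral_le (hmeas _) (hmeas _)).trans_eq
    (lintegral_congr fun s => ?_)
  rw [← hconvShiftKernel_mul_indicator l v hh ht, enorm_mul]

theorem lintegral_enorm_hconvShiftKernel_le {l : ℝ → ℝ} (hl : Measurable l) (T h : ℝ) :
    ∫⁻ u, ‖hconvShiftKernel l T h u‖ₑ
      ≤ (∫⁻ u in Ico 0 (T - h), ‖l (u + h) - l u‖ₑ) + ∫⁻ u in Ico 0 h, ‖l u‖ₑ := by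
  calc ∫⁻ u, ‖hconvShiftKernel l T h u‖ₑ
      ≤ ∫⁻ u, ‖(Ico 0 (T - h)).indicator (fun u => l (u + h) - l u) u‖ₑ
          + ‖(Ico 0 h).indicator l (u + h)‖ₑ :=
        lintegral_mono fun u => enorm_add_le _ _
    _ = (∫⁻ u in Ico 0 (T - h), ‖l (u + h) - l u‖ₑ) + ∫⁻ u in Ico 0 h, ‖l u‖ₑ := by
        have hm : Measurable fun u =>
            ‖(Ico 0 (T - h)).indicator (fun u => l (u + h) - l u) u‖ₑ :=
          (((hl.comp (measurable_add_const h)).sub hl).indicator measurableSet_Ico).enorm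
        rw [lintegral_add_left hm,
          lintegral_add_right_eq_self (fun u => ‖(Ico 0 h).indicator l u‖ₑ) h]
        simp only [enorm_indicator_eq_indicator_enorm]
        rw [lintegral_indicator measurableSet_Ico, lintegral_indicator measurableSet_Ico]

theorem lintegral_enorm_hconv_add_sub_hconv_rpow_le {l v : ℝ → ℝ} (hl : Measurable l)
    (hv : Measurable v) {T h p : ℝ} (hh : 0 ≤ h) (hp : 1 ≤ p) :
    ∫⁻ t in Ioc 0 (T - h), ‖hconv l v (t + h) - hconv l v t‖ₑ ^ p
      ≤ ((∫⁻ u in Ico 0 (T - h), ‖l (u + h) - l u‖ₑ) + ∫⁻ u in Ico 0 h, ‖l u‖ₑ) ^ p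
        * ∫⁻ s in Ioc 0 T, ‖v s‖ₑ ^ p := by
  have hp0 : 0 < p := by linarith
  have hV : ∫⁻ s, ‖(Ioc 0 T).indicator v s‖ₑ ^ p = ∫⁻ s in Ioc 0 T, ‖v s‖ₑ ^ p := by
    rw [← lintegral_indicator measurableSet_Ioc]
    refine lintegral_congr fun s => ?_
    by_cases hs : s ∈ Ioc 0 T <;> simp [hs, hp0]
  calc ∫⁻ t in Ioc 0 (T - h), ‖hconv l v (t + h) - hconv l v t‖ₑ ^ p
      ≤ ∫⁻ t in Ioc 0 (T - h),
          (∫⁻ s, ‖hconvShiftKernel l T h (t - s)‖ₑ * ‖(Ioc 0 T).indicator v s‖ₑ) ^ p :=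
        setLIntegral_mono' measurableSet_Ioc fun t ht => ENNReal.rpow_le_rpow
          (enorm_hconv_add_sub_hconv_le hl hv hh (by linarith [ht.2])) hp0.le
    _ ≤ ∫⁻ t, (∫⁻ s, ‖hconvShiftKernel l T h (t - s)‖ₑ * ‖(Ioc 0 T).indicator v s‖ₑ) ^ p :=
        setLIntegral_le_lintegral _ _
    _ ≤ (∫⁻ u, ‖hconvShiftKernel l T h u‖ₑ) ^ p * ∫⁻ s, ‖(Ioc 0 T).indicator v s‖ₑ ^ p :=
        lintegral_rpow_lintegral_sub_mul_le volume (measurable_hconvShiftKernel hl T h).enorm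
          (hv.indicator measurableSet_Ioc).enorm hp
    _ ≤ _ := by
        rw [hV]
        exact mul_le_mul_left
          (ENNReal.rpow_le_rpow (lintegral_enorm_hconvShiftKernel_le hl T h) hp0.le) _

theorem hconv_translation_le_of_measurable {l v : ℝ → ℝ} (hlm : Measurable l)
    (hvm : Measurable v) {T h p : ℝ} (hh : 0 ≤ h) (hhT : h ≤ T) (hp : 1 ≤ p)
    (hl : IntegrableOn l (Ioc 0 T))
    (hv : MemLp v (ENNReal.ofReal p) (volume.restrict (Ioc 0 T))) :
    ∫ t in Ioc 0 (T - h), |hconv l v (t + h) - hconv l v t| ^ p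
      ≤ ((∫ t in Ioc 0 (T - h), |l (t + h) - l t|)
          + ∫ s in Ioc 0 T, |(Ioo 0 h).indicator l s|) ^ p * ∫ t in Ioc 0 T, |v t| ^ p := by
  have hp0 : 0 < p := by linarith
  have hA1 : ∫⁻ u in Ico 0 (T - h), ‖l (u + h) - l u‖ₑ
      = ENNReal.ofReal (∫ t in Ioc 0 (T - h), |l (t + h) - l t|) := by
    have hshift : IntegrableOn (fun t => l (t + h)) (Ioc 0 (T - h)) := by
      simpa [preimage_add_const_Ioc, Function.comp_def] using
        ((measurePreserving_add_right volume h).integrableOn_comp_preimage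
          (measurableEmbedding_addRight h)).2 (hl.mono_set (Ioc_subset_Ioc_left hh))
    rw [setLIntegral_congr Ico_ae_eq_Ioc]
    exact (ofReal_integral_norm_eq_lintegral_enorm
      (hshift.sub (hl.mono_set (Ioc_subset_Ioc_right (by linarith))))).symm
  have hA2 : ∫⁻ u in Ico 0 h, ‖l u‖ₑ
      = ENNReal.ofReal (∫ s in Ioc 0 T, |(Ioo 0 h).indicator l s|) := by
    simp only [← Real.norm_eq_abs]
    rw [ofReal_integral_norm_eq_lintegral_enorm (hl.indicator measurableSet_Ioo)]
    simp_rw [enorm_indicator_eq_indicator_enorm]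
    rw [lintegral_indicator measurableSet_Ioo, Measure.restrict_restrict measurableSet_Ioo,
      inter_eq_left.2 (Ioo_subset_Ioc_self.trans (Ioc_subset_Ioc_right hhT)),
      setLIntegral_congr Ioo_ae_eq_Ico.symm]
  have hV : ∫⁻ s in Ioc 0 T, ‖v s‖ₑ ^ p = ENNReal.ofReal (∫ t in Ioc 0 T, |v t| ^ p) := by
    have hint := hv.integrable_norm_rpow (by simpa using hp0) ENNReal.ofReal_ne_top
    rw [ENNReal.toReal_ofReal hp0.le] at hint
    simp only [← Real.norm_eq_abs]
    rw [ofReal_integral_eq_lintegral_ofReal hint (ae_of_all _ fun _ => by positivity)]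
    refine lintegral_congr fun s => ?_
    rw [← ENNReal.ofReal_rpow_of_nonneg (norm_nonneg _) hp0.le, ofReal_norm]
  have hLHS : ENNReal.ofReal (∫ t in Ioc 0 (T - h), |hconv l v (t + h) - hconv l v t| ^ p)
      ≤ ∫⁻ t in Ioc 0 (T - h), ‖hconv l v (t + h) - hconv l v t‖ₑ ^ p := by
    refine (Real.ofReal_le_enorm _).trans ((enorm_integral_le_lintegral_enorm _).trans_eq
      (lintegral_congr fun t => ?_))
    rw [Real.enorm_eq_ofReal (by positivity), ← Real.norm_eq_abs,
      ← ENNReal.ofReal_rpow_of_nonneg (norm_nonneg _) hp0.le, ofReal_norm]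
  rw [← ENNReal.ofReal_le_ofReal_iff (by positivity)]
  calc _ ≤ _ := hLHS
    _ ≤ _ := lintegral_enorm_hconv_add_sub_hconv_rpow_le hlm hvm hh hp
    _ = _ := by
        rw [hA1, hA2, hV, ← ENNReal.ofReal_add (by positivity) (by positivity),
          ENNReal.ofReal_rpow_of_nonneg (by positivity) hp0.le,
          ← ENNReal.ofReal_mul (by positivity)]

theorem hconv_congr_ae_s1 {l l' v v' : ℝ → ℝ} {T t : ℝ} (hl : ∀ᵐ x, x ∈ Ioc 0 T → l x = l' x)
    (hv : ∀ᵐ x, x ∈ Ioc 0 T → v x = v' x) (ht : t ≤ T) : hconv l v t = hconv l' v' t := by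
  refine setIntegral_congr_ae measurableSet_Ioc ?_
  filter_upwards [(Measure.measurePreserving_sub_left volume t).quasiMeasurePreserving.ae hl, hv,
    Measure.ae_ne volume t] with s hls hvs hst hs
  rw [hls ⟨sub_pos.2 (lt_of_le_of_ne hs.2 hst), by linarith [hs.1]⟩,
    hvs ⟨hs.1, hs.2.trans ht⟩]

theorem exists_measurable_ae_eq_on {α : Type*} [MeasurableSpace α] {μ : Measure α} {s : Set α}
    (hs : MeasurableSet s) {f : α → ℝ} (hf : AEStronglyMeasurable f (μ.restrict s)) :
    ∃ g, Measurable g ∧ ∀ᵐ x ∂μ, x ∈ s → f x = g x :=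
  ⟨hf.mk f, hf.stronglyMeasurable_mk.measurable, (ae_restrict_iff' hs).1 hf.ae_eq_mk⟩

theorem hconv_translation_le {l v : ℝ → ℝ} {T h p : ℝ} (hh : 0 ≤ h) (hhT : h ≤ T) (hp : 1 ≤ p)
    (hl : IntegrableOn l (Ioc 0 T))
    (hv : MemLp v (ENNReal.ofReal p) (volume.restrict (Ioc 0 T))) :
    ∫ t in Ioc 0 (T - h), |hconv l v (t + h) - hconv l v t| ^ p
      ≤ ((∫ t in Ioc 0 (T - h), |l (t + h) - l t|)
          + ∫ s in Ioc 0 T, |(Ioo 0 h).indicator l s|) ^ p * ∫ t in Ioc 0 T, |v t| ^ p := by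
  obtain ⟨l', hl'm, hll'⟩ := exists_measurable_ae_eq_on measurableSet_Ioc hl.1
  obtain ⟨v', hv'm, hvv'⟩ := exists_measurable_ae_eq_on measurableSet_Ioc hv.1
  have hLHS : ∫ t in Ioc 0 (T - h), |hconv l v (t + h) - hconv l v t| ^ p
      = ∫ t in Ioc 0 (T - h), |hconv l' v' (t + h) - hconv l' v' t| ^ p :=
    setIntegral_congr_fun measurableSet_Ioc fun t ht => by
      rw [hconv_congr_ae_s1 hll' hvv' (by linarith [ht.2]),
        hconv_congr_ae_s1 hll' hvv' (by linarith [ht.2])]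
  have hA1 : ∫ t in Ioc 0 (T - h), |l (t + h) - l t|
      = ∫ t in Ioc 0 (T - h), |l' (t + h) - l' t| := by
    refine setIntegral_congr_ae measurableSet_Ioc ?_
    filter_upwards [hll', (measurePreserving_add_right volume h).quasiMeasurePreserving.ae hll']
      with t hlt hlth ht
    rw [hlt ⟨ht.1, by linarith [ht.2]⟩, hlth ⟨by linarith [ht.1], by linarith [ht.2]⟩]
  have hA2 : ∫ s in Ioc 0 T, |(Ioo 0 h).indicator l s|
      = ∫ s in Ioc 0 T, |(Ioo 0 h).indicator l' s| := by
    refine setIntegral_congr_ae measurableSet_Ioc ?_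
    filter_upwards [hll'] with s hls hs
    simp only [indicator_apply, hls hs]
  have hV : ∫ t in Ioc 0 T, |v t| ^ p = ∫ t in Ioc 0 T, |v' t| ^ p := by
    refine setIntegral_congr_ae measurableSet_Ioc ?_
    filter_upwards [hvv'] with s hvs hs
    rw [hvs hs]
  rw [hLHS, hA1, hA2, hV]
  exact hconv_translation_le_of_measurable hl'm hv'm hh hhT hp
    (hl.congr ((ae_restrict_iff' measurableSet_Ioc).2 hll'))
    (hv.ae_eq ((ae_restrict_iff' measurableSet_Ioc).2 hvv'))

theorem stmt1_general
    (T h p : ℝ) (hh : 0 < h) (hhT : h < T) (hp : 1 ≤ p)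
    (l v : ℝ → ℝ)
    (hl : IntegrableOn l (Set.Ioc 0 T))
    (hv : MemLp v (ENNReal.ofReal p) (volume.restrict (Set.Ioc 0 T))) :
    ∫ t in Set.Ioc 0 (T - h), |hconv l v (t + h) - hconv l v t| ^ p
      ≤ 2 ^ p *
        ((∫ t in Set.Ioc 0 (T - h), |l (t + h) - l t|) ^ p
          + (∫ s in Set.Ioc 0 T, |Set.indicator (Set.Ioo 0 h) l s|) ^ p) *
        (∫ t in Set.Ioc 0 T, |v t| ^ p) := by
  calc _ ≤ _ := hconv_translation_le hh.le hhT.le hp hl hv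
    _ ≤ _ := by
        gcongr
        exact Real.add_rpow_le_two_rpow_mul_add_rpow (integral_nonneg fun _ => abs_nonneg _)
          (integral_nonneg fun _ => abs_nonneg _) hp

/-- the key translation estimate: for `l ∈ L¹((0,T))`, `v ∈ L_p((0,T))`,
`1 ≤ p < ∞` and `0 < h < T`,
`∫₀^{T−h} |(l∗v)(t+h) − (l∗v)(t)|^p dt
  ≤ 2^p ( ‖τ_h l − l‖_{L¹((0,T−h))}^p + ‖χ_{(0,h)} l‖_{L¹((0,T))}^p ) ‖v‖_{L_p((0,T))}^p`. -/
theorem stmt1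
    (T h p : ℝ) (hT : 0 < T) (hh : 0 < h) (hhT : h < T) (hp : 1 ≤ p)
    (l v : ℝ → ℝ)
    (hl : IntegrableOn l (Set.Ioc 0 T))
    (hv : MemLp v (ENNReal.ofReal p) (volume.restrict (Set.Ioc 0 T))) :
    ∫ t in Set.Ioc 0 (T - h), |hconv l v (t + h) - hconv l v t| ^ p
      ≤ 2 ^ p *
        ((∫ t in Set.Ioc 0 (T - h), |l (t + h) - l t|) ^ p
          + (∫ s in Set.Ioc 0 T, |Set.indicator (Set.Ioo 0 h) l s|) ^ p) *
        (∫ t in Set.Ioc 0 T, |v t| ^ p) :=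
  stmt1_general T h p hh hhT hp l v hl hv
end

section
/- Let k ∈ H¹₁((0,T)) (i.e., k is absolutely continuous with integrable derivative on (0,T)) be nonnegative and nonincreasing, let H : ℝ → ℝ be convex and C¹, let u₀ ∈ ℝ, and let u ∈ L^∞((0,T)). Then for almost every t ∈ (0,T): H'(u(t)) · d/dt ( ∫₀ᵗ k(t−s)(u(s)−u₀) ds ) ≥ d/dt ( ∫₀ᵗ k(t−s)(H(u(s))−H(u₀)) ds ). -/
open MeasureTheory Set

/-!
Write `k = k(0) + ∫ q` with `q = k'`. Monotonicity of `k` gives `q ≤ 0` a.e., and Fubini turns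
`k ∗ v` into `∫₀ᵗ (k(0) v + q ∗ v)`, so by Lebesgue differentiation `∂ₜ (k ∗ v) = k(0) v + q ∗ v`
a.e. for every integrable `v`. Let `φ ≥ 0` be the gap between `H` and its tangent at `u(t)`; by
linearity in `v`, the right-hand side minus the left-hand side of the inequality equals
`φ(u₀) k(t) - ∫₀ᵗ q(t - s) φ(u(s)) ds`, which is nonnegative since `k(t) ≥ 0` and `q ≤ 0`.
-/

open scoped Convolution

lemma ConvexOn.add_deriv_mul_sub_le {S : Set ℝ} {f : ℝ → ℝ} (hf : ConvexOn ℝ S f) {x y : ℝ}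
    (hx : x ∈ S) (hy : y ∈ S) (hfx : DifferentiableAt ℝ f x) :
    f x + deriv f x * (y - x) ≤ f y := by
  rcases lt_trichotomy y x with h | rfl | h
  · have := hf.slope_le_deriv hy hx h hfx
    rw [slope_def_field, div_le_iff₀ (sub_pos.2 h)] at this
    linarith
  · simp
  · have := hf.deriv_le_slope hx hy h hfx
    rw [slope_def_field, le_div_iff₀ (sub_pos.2 h)] at this
    linarith

section HalfLineConvolution

variable {q v : ℝ → ℝ} {t : ℝ}

lemma hconv_eq_convolution (hq0 : ∀ x ≤ 0, q x = 0) {τ : ℝ} (hτ : τ ≤ t) :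
    hconv q v τ = ((Ioc 0 t).indicator v ⋆[ContinuousLinearMap.mul ℝ ℝ] q) τ := by
  rw [convolution_mul, hconv, ← setIntegral_eq_of_subset_of_forall_sdiff_eq_zero measurableSet_Ioc
    (Ioc_subset_Ioc_right hτ), ← integral_indicator measurableSet_Ioc]
  · congr with s
    rw [indicator_mul_right, mul_comm]
  · intro s hs
    have : τ - s ≤ 0 := by
      simp only [Set.mem_sdiff, mem_Ioc, not_and, not_le] at hs
      linarith [hs.2 hs.1.1]
    rw [hq0 _ this, zero_mul]

lemma integrableOn_hconv_s3 (hq : Integrable q) (hq0 : ∀ x ≤ 0, q x = 0)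
    (hv : IntegrableOn v (Ioc 0 t)) : IntegrableOn (hconv q v) (Ioc 0 t) :=
  ((hv.integrable_indicator measurableSet_Ioc).integrable_convolution _ hq).integrableOn.congr_fun
    (fun _ hτ => (hconv_eq_convolution hq0 hτ.2).symm) measurableSet_Ioc

lemma setIntegral_Ioc_comp_sub_right (hq : Integrable q) (hq0 : ∀ x ≤ 0, q x = 0) {s : ℝ}
    (hs : 0 ≤ s) (ht : 0 ≤ t) : ∫ τ in Ioc 0 t, q (τ - s) = ∫ r in 0..t - s, q r := by
  rw [← intervalIntegral.integral_of_le ht, intervalIntegral.integral_comp_sub_right, zero_sub,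
    ← intervalIntegral.integral_add_adjacent_intervals (b := 0) hq.intervalIntegrable
      hq.intervalIntegrable, intervalIntegral.integral_of_le (neg_nonpos.2 hs),
    setIntegral_eq_zero_of_forall_eq_zero fun x hx => hq0 x hx.2, zero_add]

lemma setIntegral_hconv (hq : Integrable q) (hq0 : ∀ x ≤ 0, q x = 0)
    (hv : IntegrableOn v (Ioc 0 t)) :
    ∫ τ in Ioc 0 t, hconv q v τ = ∫ s in Ioc 0 t, (∫ r in 0..t - s, q r) * v s := by
  set w := (Ioc 0 t).indicator v
  have hF : Integrable (fun p : ℝ × ℝ => w p.2 * q (p.1 - p.2))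
      ((volume.restrict (Ioc 0 t)).prod volume) := by
    have h := ((hv.integrable_indicator measurableSet_Ioc).convolution_integrand
      (ContinuousLinearMap.mul ℝ ℝ) hq (μ := volume) (ν := volume)).restrict (s := Ioc 0 t ×ˢ univ)
    rwa [← Measure.prod_restrict, Measure.restrict_univ] at h
  calc ∫ τ in Ioc 0 t, hconv q v τ = ∫ τ in Ioc 0 t, ∫ s, w s * q (τ - s) :=
        setIntegral_congr_fun measurableSet_Ioc fun τ hτ => hconv_eq_convolution hq0 hτ.2
    _ = ∫ s, ∫ τ in Ioc 0 t, w s * q (τ - s) := integral_integral_swap hF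
    _ = ∫ s, w s * ∫ τ in Ioc 0 t, q (τ - s) := by simp_rw [integral_const_mul]
    _ = ∫ s in Ioc 0 t, v s * ∫ τ in Ioc 0 t, q (τ - s) := by
        rw [← integral_indicator measurableSet_Ioc]
        simp_rw [indicator_mul_left, w]
    _ = ∫ s in Ioc 0 t, (∫ r in 0..t - s, q r) * v s :=
        setIntegral_congr_fun measurableSet_Ioc fun s hs => by
          rw [mul_comm, setIntegral_Ioc_comp_sub_right hq hq0 hs.1.le (hs.1.le.trans hs.2)]

lemma hconv_eq_setIntegral {k : ℝ → ℝ} (hq : Integrable q) (hq0 : ∀ x ≤ 0, q x = 0)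
    (hk : ∀ x ∈ Icc 0 t, k x = k 0 + ∫ r in 0..x, q r) (hv : IntegrableOn v (Ioc 0 t)) :
    hconv k v t = ∫ τ in Ioc 0 t, (k 0 * v τ + hconv q v τ) := by
  have hK : IntegrableOn (fun s => (∫ r in 0..t - s, q r) * v s) (Ioc 0 t) := by
    refine hv.bdd_mul (c := ∫ r, ‖q r‖) ?_ (ae_of_all _ fun s => ?_)
    · exact ((intervalIntegral.continuous_primitive (fun _ _ => hq.intervalIntegrable) 0).comp
        (continuous_const.sub continuous_id)).aestronglyMeasurable
    · exact intervalIntegral.norm_integral_le_integral_norm_uIoc.trans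
        (setIntegral_le_integral hq.norm (ae_of_all _ fun _ => norm_nonneg _))
  rw [integral_add (hv.const_mul _) (integrableOn_hconv_s3 hq hq0 hv), integral_const_mul,
    setIntegral_hconv hq hq0 hv, ← integral_const_mul, ← integral_add (hv.const_mul _) hK, hconv]
  refine setIntegral_congr_fun measurableSet_Ioc fun s hs => ?_
  rw [hk (t - s) ⟨by linarith [hs.2], by linarith [hs.1]⟩]
  ring

noncomputable def hconvDeriv (k q v : ℝ → ℝ) (t : ℝ) : ℝ := k 0 * v t + hconv q v t

lemma ae_hasDerivAt_hconv {k : ℝ → ℝ} {T : ℝ} (hq : Integrable q) (hq0 : ∀ x ≤ 0, q x = 0)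
    (hk : ∀ x ∈ Icc 0 T, k x = k 0 + ∫ r in 0..x, q r) (hv : IntegrableOn v (Ioc 0 T)) :
    ∀ᵐ t ∂volume.restrict (Ioc 0 T), HasDerivAt (hconv k v) (hconvDeriv k q v t) t := by
  rcases le_or_gt T 0 with hT | hT
  · simp [Ioc_eq_empty_of_le hT]
  have hg : IntervalIntegrable (hconvDeriv k q v) volume 0 T :=
    (intervalIntegrable_iff_integrableOn_Ioc_of_le hT.le).2
      ((hv.const_mul _).add (integrableOn_hconv_s3 hq hq0 hv))
  rw [Measure.restrict_congr_set Ioo_ae_eq_Ioc.symm]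
  filter_upwards [ae_restrict_of_ae hg.ae_hasDerivAt_integral, ae_restrict_mem measurableSet_Ioo]
    with t ht htT
  refine (ht (Ioo_subset_Icc_self.trans Icc_subset_uIcc htT) 0
    left_mem_uIcc).congr_of_eventuallyEq ?_
  filter_upwards [isOpen_Ioo.mem_nhds htT] with y hy
  rw [intervalIntegral.integral_of_le hy.1.le]
  exact hconv_eq_setIntegral hq hq0 (fun x hx => hk x ⟨hx.1, hx.2.trans hy.2.le⟩)
    (hv.mono_set (Ioc_subset_Ioc_right hy.2.le))

end HalfLineConvolution

lemma Continuous.memLp_top_comp {α : Type*} [MeasurableSpace α] {μ : Measure α} {f : ℝ → ℝ}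
    {u : α → ℝ} {C : ℝ} (hf : Continuous f) (hu : AEStronglyMeasurable u μ)
    (huC : ∀ᵐ x ∂μ, |u x| ≤ C) : MemLp (fun x => f (u x)) ⊤ μ := by
  obtain ⟨M, hM⟩ := (isCompact_Icc (a := -C) (b := C)).exists_bound_of_continuousOn hf.continuousOn
  exact memLp_top_of_bound (hf.comp_aestronglyMeasurable hu) M
    (huC.mono fun x hx => hM _ (abs_le.1 hx))

lemma ae_nonpos_of_antitoneOn {k q : ℝ → ℝ} {T : ℝ} (hq : IntervalIntegrable q volume 0 T)
    (hk : ∀ x ∈ Icc 0 T, k x = k 0 + ∫ r in 0..x, q r) (hkmono : AntitoneOn k (Icc 0 T)) :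
    ∀ᵐ x ∂volume.restrict (Ioc 0 T), q x ≤ 0 := by
  rw [Measure.restrict_congr_set Ioo_ae_eq_Ioc.symm]
  filter_upwards [ae_restrict_of_ae hq.ae_hasDerivAt_integral, ae_restrict_mem measurableSet_Ioo]
    with x hx hxT
  refine ((hx (Ioo_subset_Icc_self.trans Icc_subset_uIcc hxT) 0
    left_mem_uIcc).hasDerivWithinAt (s := Ioo 0 T)).nonpos_of_antitoneOn
    (isOpen_Ioo.preperfect x hxT) fun a ha b hb hab => ?_
  have := hkmono (Ioo_subset_Icc_self ha) (Ioo_subset_Icc_self hb) hab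
  rw [hk a (Ioo_subset_Icc_self ha), hk b (Ioo_subset_Icc_self hb)] at this
  linarith

lemma ConvexOn.hconvDeriv_comp_le {k q H u : ℝ → ℝ} {u₀ t : ℝ} (hH : ConvexOn ℝ univ H)
    (hHd : DifferentiableAt ℝ H (u t)) (hq : Integrable q) (hq_nonpos : ∀ᵐ x, q x ≤ 0)
    (ht : 0 ≤ t) (hk : k t = k 0 + ∫ r in 0..t, q r) (hkt : 0 ≤ k t)
    (hu : MemLp (fun s => u s - u₀) ⊤ (volume.restrict (Ioc 0 t)))
    (hHu : MemLp (fun s => H (u s) - H u₀) ⊤ (volume.restrict (Ioc 0 t))) :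
    hconvDeriv k q (fun s => H (u s) - H u₀) t
      ≤ deriv H (u t) * hconvDeriv k q (fun s => u s - u₀) t := by
  set D := deriv H (u t)
  set φ := fun x => H x - H (u t) - D * (x - u t)
  have hφ : ∀ x, 0 ≤ φ x := fun x => by
    have := hH.add_deriv_mul_sub_le (mem_univ _) (mem_univ x) hHd
    simp only [φ]
    linarith
  have hq₁ : IntegrableOn (fun s => q (t - s)) (Ioc 0 t) := (hq.comp_sub_left t).integrableOn
  have hqk : ∫ s in Ioc 0 t, q (t - s) = k t - k 0 := by
    rw [← intervalIntegral.integral_of_le ht, intervalIntegral.integral_comp_sub_left, sub_self,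
      sub_zero, hk]
    ring
  have hgap : ∫ s in Ioc 0 t, q (t - s) * φ (u s) = hconv q (fun s => H (u s) - H u₀) t
      - D * hconv q (fun s => u s - u₀) t + φ u₀ * (k t - k 0) := by
    have hqu : IntegrableOn (fun s => q (t - s) * (u s - u₀)) (Ioc 0 t) := hq₁.mul_of_top_left hu
    have hqHu : IntegrableOn (fun s => q (t - s) * (H (u s) - H u₀)) (Ioc 0 t) :=
      hq₁.mul_of_top_left hHu
    rw [hconv, hconv, ← hqk, ← integral_const_mul, ← integral_const_mul,
      ← integral_sub hqHu (hqu.const_mul D),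
      ← integral_add ?_ (hq₁.const_mul _)]
    · congr with s
      simp only [φ]
      ring
    · exact hqHu.sub (hqu.const_mul D)
  have hgap_nonpos : ∫ s in Ioc 0 t, q (t - s) * φ (u s) ≤ 0 := by
    refine integral_nonpos_of_ae ?_
    filter_upwards [ae_restrict_of_ae
      ((Measure.measurePreserving_sub_left volume t).quasiMeasurePreserving.ae hq_nonpos)] with s hs
    exact mul_nonpos_of_nonpos_of_nonneg hs (hφ _)
  have hφ₀ : φ u₀ = H u₀ - H (u t) - D * (u₀ - u t) := rfl
  simp only [hconvDeriv]
  linear_combination hgap_nonpos + mul_nonneg (hφ u₀) hkt - hgap + k 0 * hφ₀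

theorem stmt3_general
    (T : ℝ)
    (k k' : ℝ → ℝ)
    (hk' : IntegrableOn k' (Set.Ioc 0 T))
    (hkH11 : ∀ t ∈ Set.Icc 0 T, k t = k 0 + ∫ s in Set.Ioc 0 t, k' s)
    (hknn : ∀ t ∈ Set.Icc 0 T, 0 ≤ k t)
    (hkmono : AntitoneOn k (Set.Icc 0 T))
    (H : ℝ → ℝ) (hH : ContDiff ℝ 1 H) (hHconv : ConvexOn ℝ Set.univ H)
    (u₀ : ℝ) (u : ℝ → ℝ) (hum : Measurable u)
    (hubd : ∃ C, ∀ᵐ t ∂(volume.restrict (Set.Ioc 0 T)), |u t| ≤ C) :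
    ∀ᵐ t ∂(volume.restrict (Set.Ioc 0 T)),
      deriv (fun τ => hconv k (fun s => H (u s) - H u₀) τ) t
        ≤ deriv H (u t) * deriv (fun τ => hconv k (fun s => u s - u₀) τ) t := by
  set q := (Ioc 0 T).indicator k'
  have hq : Integrable q := hk'.integrable_indicator measurableSet_Ioc
  have hq0 : ∀ x ≤ 0, q x = 0 := fun x hx => indicator_of_notMem (fun h => h.1.not_ge hx) _
  have hkq : ∀ x ∈ Icc 0 T, k x = k 0 + ∫ r in 0..x, q r := fun x hx => by
    rw [hkH11 x hx, intervalIntegral.integral_of_le hx.1, setIntegral_indicator measurableSet_Ioc,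
      inter_eq_left.2 (Ioc_subset_Ioc_right hx.2)]
  have hq_nonpos : ∀ᵐ x, q x ≤ 0 := by
    filter_upwards [(ae_restrict_iff' measurableSet_Ioc).1
      (ae_nonpos_of_antitoneOn hq.intervalIntegrable hkq hkmono)] with x hx
    by_cases h : x ∈ Ioc 0 T
    · exact hx h
    · simp [q, h]
  obtain ⟨C, hC⟩ := hubd
  have hu : MemLp (fun s => u s - u₀) ⊤ (volume.restrict (Ioc 0 T)) :=
    (continuous_sub_right u₀).memLp_top_comp hum.aestronglyMeasurable hC
  have hHu : MemLp (fun s => H (u s) - H u₀) ⊤ (volume.restrict (Ioc 0 T)) :=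
    (hH.continuous.sub continuous_const).memLp_top_comp hum.aestronglyMeasurable hC
  filter_upwards [ae_hasDerivAt_hconv hq hq0 hkq (hu.integrable le_top),
    ae_hasDerivAt_hconv hq hq0 hkq (hHu.integrable le_top), ae_restrict_mem measurableSet_Ioc]
    with t hdu hdHu ht
  have htT : Ioc 0 t ⊆ Ioc 0 T := Ioc_subset_Ioc_right ht.2
  rw [hdu.deriv, hdHu.deriv]
  exact hHconv.hconvDeriv_comp_le (hH.differentiable one_ne_zero _) hq hq_nonpos ht.1.le
    (hkq t ⟨ht.1.le, ht.2⟩) (hknn t ⟨ht.1.le, ht.2⟩)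
    (hu.mono_measure (Measure.restrict_mono htT le_rfl))
    (hHu.mono_measure (Measure.restrict_mono htT le_rfl))

/-- fundamental convexity inequality: for `k ∈ H¹₁((0,T))` nonnegative and
nonincreasing, `H` convex and `C¹`, `u₀ ∈ ℝ`, `u ∈ L^∞((0,T))` measurable, for a.e.
`t ∈ (0,T)`:
`H'(u(t)) ∂ₜ(k∗[u−u₀])(t) ≥ ∂ₜ(k∗[H(u)−H(u₀)])(t)`. -/
theorem stmt3
    (T : ℝ) (hT : 0 < T)
    (k k' : ℝ → ℝ)
    (hk' : IntegrableOn k' (Set.Ioc 0 T))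
    (hkH11 : ∀ t ∈ Set.Icc 0 T, k t = k 0 + ∫ s in Set.Ioc 0 t, k' s)
    (hknn : ∀ t ∈ Set.Icc 0 T, 0 ≤ k t)
    (hkmono : AntitoneOn k (Set.Icc 0 T))
    (H : ℝ → ℝ) (hH : ContDiff ℝ 1 H) (hHconv : ConvexOn ℝ Set.univ H)
    (u₀ : ℝ) (u : ℝ → ℝ) (hum : Measurable u)
    (hubd : ∃ C, ∀ᵐ t ∂(volume.restrict (Set.Ioc 0 T)), |u t| ≤ C) :
    ∀ᵐ t ∂(volume.restrict (Set.Ioc 0 T)),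
      deriv (fun τ => hconv k (fun s => H (u s) - H u₀) τ) t
        ≤ deriv H (u t) * deriv (fun τ => hconv k (fun s => u s - u₀) τ) t :=
  stmt3_general T k k' hk' hkH11 hknn hkmono H hH hHconv u₀ u hum hubd
end
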